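/- arXiv:2103.17167 — 5 statements merged into one kernel-verified Lean document; each statement's English description precedes it below -/
import Mathlib

section
/- Let (Ω, F, P) be a probability space and G ⊆ F a sub-σ-algebra. Define L²(F|G) to be the set of complex F-measurable functions f (modulo a.e. equality) with E(|f|²|G) < ∞ almost surely. Then L²(F|G) = { g·h : g is G-measurable complex-valued, h ∈ L²(Ω, F, P) }. In particular, L²(F|G) is a module over the ring L⁰(G) of G-measurable complex functions. -/
open MeasureTheory
open scoped ENNReal

lemma key_le {Ω : Type*} {m0 : MeasurableSpace Ω} {μ : Measure Ω}
    {G : MeasurableSpace Ω} (hG : G ≤ m0)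
    {d₁ d₂ : Ω → ℝ≥0∞} (hd₁ : AEMeasurable d₁ μ) (hd₂ : AEMeasurable d₂ μ)
    (hle : ∀ s : Set Ω, MeasurableSet[G] s → ∫⁻ ω in s, d₁ ω ∂μ ≤ ∫⁻ ω in s, d₂ ω ∂μ)
    {w : Ω → ℝ≥0∞} (hw : Measurable[G] w) :
    ∫⁻ ω, d₁ ω * w ω ∂μ ≤ ∫⁻ ω, d₂ ω * w ω ∂μ := by
  have hmle : (μ.withDensity d₁).trim hG ≤ (μ.withDensity d₂).trim hG := by
    rw [@Measure.le_iff]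
    intro s hs
    rw [trim_measurableSet_eq hG hs, trim_measurableSet_eq hG hs,
      withDensity_apply _ (hG s hs), withDensity_apply _ (hG s hs)]
    exact hle s hs
  have h1 : ∀ d : Ω → ℝ≥0∞, AEMeasurable d μ →
      ∫⁻ ω, w ω ∂((μ.withDensity d).trim hG) = ∫⁻ ω, d ω * w ω ∂μ := by
    intro d hd
    rw [lintegral_trim hG hw,
      lintegral_withDensity_eq_lintegral_mul₀ hd (hw.mono hG le_rfl).aemeasurable]
    rfl
  rw [← h1 d₁ hd₁, ← h1 d₂ hd₂]
  exact lintegral_mono' hmle le_rfl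

/-- `f` has an almost surely finite conditional second moment given `G`; rendered via a
`G`-measurable witness of the conditional expectation of `|f|²` (in the extended reals)
which is almost surely finite. -/
def HasFiniteCondSecondMoment {Ω : Type*} (m0 : MeasurableSpace Ω)
    (G : MeasurableSpace Ω) (μ : @MeasureTheory.Measure Ω m0) (f : Ω → ℂ) : Prop :=
  ∃ c : Ω → ℝ≥0∞, Measurable[G] c ∧
    (∀ s : Set Ω, MeasurableSet[G] s →
      ∫⁻ ω in s, c ω ∂μ = ∫⁻ ω in s, (‖f ω‖₊ : ℝ≥0∞) ^ 2 ∂μ) ∧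
    ∀ᵐ ω ∂μ, c ω < ⊤

lemma backward {Ω : Type*} {m0 : MeasurableSpace Ω} {μ : Measure Ω} [IsProbabilityMeasure μ]
    {G : MeasurableSpace Ω} (hG : G ≤ m0) (f g h : Ω → ℂ)
    (hg : Measurable[G] g) (hh : MemLp h 2 μ)
    (hfe : f =ᵐ[μ] fun ω => g ω * h ω) : HasFiniteCondSecondMoment m0 G μ f := by
  have hint : Integrable (fun ω => ‖h ω‖ ^ 2) μ := by
    have := hh.integrable_norm_rpow (two_ne_zero) (ENNReal.ofNat_ne_top)
    simpa [ENNReal.toReal_ofNat, Real.rpow_natCast] using this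
  set k : Ω → ℝ := μ[(fun ω => ‖h ω‖ ^ 2)|G] with hk
  have hknn : 0 ≤ᵐ[μ] k := condExp_nonneg (Filter.Eventually.of_forall fun ω => by positivity)
  have hkmeasG : Measurable[G] k := stronglyMeasurable_condExp.measurable
  have hkint : Integrable k μ := integrable_condExp
  -- set equality for k vs ‖h‖²
  have hset : ∀ t : Set Ω, MeasurableSet[G] t →
      ∫⁻ ω in t, ENNReal.ofReal (k ω) ∂μ = ∫⁻ ω in t, (‖h ω‖₊ : ℝ≥0∞) ^ 2 ∂μ := by
    intro t ht
    have h1 : ∫⁻ ω in t, ENNReal.ofReal (k ω) ∂μ = ENNReal.ofReal (∫ ω in t, k ω ∂μ) :=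
      (ofReal_integral_eq_lintegral_ofReal hkint.restrict (ae_restrict_of_ae hknn)).symm
    have h2 : ∫ ω in t, k ω ∂μ = ∫ ω in t, ‖h ω‖ ^ 2 ∂μ := setIntegral_condExp hG hint ht
    have h3 : ENNReal.ofReal (∫ ω in t, ‖h ω‖ ^ 2 ∂μ) = ∫⁻ ω in t, ENNReal.ofReal (‖h ω‖ ^ 2) ∂μ :=
      ofReal_integral_eq_lintegral_ofReal hint.restrict
        (ae_restrict_of_ae (Filter.Eventually.of_forall fun ω => by positivity))
    rw [h1, h2, h3]
    refine lintegral_congr fun ω => ?_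
    rw [ENNReal.ofReal_pow (norm_nonneg _), ofReal_norm, enorm_eq_nnnorm]
  have haek : AEMeasurable (fun ω => ENNReal.ofReal (k ω)) μ :=
    (ENNReal.measurable_ofReal.comp (hkmeasG.mono hG le_rfl)).aemeasurable
  have haeh : AEMeasurable (fun ω => (‖h ω‖₊ : ℝ≥0∞) ^ 2) μ :=
    (hh.1.enorm.pow_const 2)
  have keq : ∀ w : Ω → ℝ≥0∞, Measurable[G] w →
      ∫⁻ ω, ENNReal.ofReal (k ω) * w ω ∂μ = ∫⁻ ω, (‖h ω‖₊ : ℝ≥0∞) ^ 2 * w ω ∂μ :=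
    fun w hw => le_antisymm
      (key_le hG haek haeh (fun s hs => (hset s hs).le) hw)
      (key_le hG haeh haek (fun s hs => (hset s hs).ge) hw)
  refine ⟨fun ω => ENNReal.ofReal (k ω) * (‖g ω‖₊ : ℝ≥0∞) ^ 2, ?_, ?_, ?_⟩
  · exact (ENNReal.measurable_ofReal.comp hkmeasG).mul
      ((hg.nnnorm.coe_nnreal_ennreal).pow_const 2)
  · intro s hs
    have hw : Measurable[G] (s.indicator fun ω => (‖g ω‖₊ : ℝ≥0∞) ^ 2) :=
      ((hg.nnnorm.coe_nnreal_ennreal).pow_const 2).indicator hs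
    have e1 : ∫⁻ ω in s, ENNReal.ofReal (k ω) * (‖g ω‖₊ : ℝ≥0∞) ^ 2 ∂μ
        = ∫⁻ ω, ENNReal.ofReal (k ω) * (s.indicator fun ω => (‖g ω‖₊ : ℝ≥0∞) ^ 2) ω ∂μ := by
      rw [← lintegral_indicator (hG s hs)]
      refine lintegral_congr fun ω => ?_
      by_cases hωs : ω ∈ s <;> simp [Set.indicator_apply, hωs]
    have e2 : ∫⁻ ω, (‖h ω‖₊ : ℝ≥0∞) ^ 2 * (s.indicator fun ω => (‖g ω‖₊ : ℝ≥0∞) ^ 2) ω ∂μ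
        = ∫⁻ ω in s, (‖f ω‖₊ : ℝ≥0∞) ^ 2 ∂μ := by
      rw [← lintegral_indicator (hG s hs)]
      have : ∀ᵐ ω ∂μ, (‖h ω‖₊ : ℝ≥0∞) ^ 2 * (s.indicator fun ω => (‖g ω‖₊ : ℝ≥0∞) ^ 2) ω
          = s.indicator (fun ω => (‖f ω‖₊ : ℝ≥0∞) ^ 2) ω := by
        filter_upwards [hfe] with ω hω
        by_cases hωs : ω ∈ s <;>
          simp [Set.indicator_apply, hωs, hω, nnnorm_mul, mul_pow, ENNReal.coe_mul, mul_comm]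
      exact lintegral_congr_ae this
    rw [e1, keq _ hw, e2]
  · exact Filter.Eventually.of_forall fun ω =>
      ENNReal.mul_lt_top ENNReal.ofReal_lt_top (by exact_mod_cast ENNReal.coe_lt_top)

lemma factor {Ω : Type*} {m0 : MeasurableSpace Ω} {μ : Measure Ω} [IsProbabilityMeasure μ]
    {G : MeasurableSpace Ω} (hG : G ≤ m0) (F : Ω → ℂ) (hF : AEStronglyMeasurable[m0] F μ)
    (c : Ω → ℝ≥0∞) (hc : Measurable[G] c) (hfin : ∀ᵐ ω ∂μ, c ω < ⊤)
    (hdom : ∀ s : Set Ω, MeasurableSet[G] s →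
      ∫⁻ ω in s, (‖F ω‖₊ : ℝ≥0∞) ^ 2 ∂μ ≤ ∫⁻ ω in s, c ω ∂μ) :
    ∃ g h : Ω → ℂ, Measurable[G] g ∧ MemLp h 2 μ ∧ F =ᵐ[μ] fun ω => g ω * h ω := by
  set g : Ω → ℂ := fun ω => ((Real.sqrt ((c ω + 1).toReal) : ℝ) : ℂ) with hgdef
  set h : Ω → ℂ := fun ω => F ω * (g ω)⁻¹ with hhdef
  have hgmeas : Measurable[G] g := by
    exact Complex.measurable_ofReal.comp
      (Real.continuous_sqrt.measurable.comp ((hc.add_const 1).ennreal_toReal))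
  -- pointwise facts on the good set
  have hgood : ∀ᵐ ω ∂μ, g ω ≠ 0 ∧ ((‖g ω‖₊ : ℝ≥0∞)) ^ 2 = c ω + 1 := by
    filter_upwards [hfin] with ω hω
    have hne : c ω + 1 ≠ ⊤ := by
      simp [ENNReal.add_ne_top, hω.ne]
    have htpos : 0 < (c ω + 1).toReal :=
      ENNReal.toReal_pos (by simp) hne
    have hg0 : g ω ≠ 0 := by
      simp only [hgdef, ne_eq, Complex.ofReal_eq_zero]
      exact (Real.sqrt_pos.mpr htpos).ne'
    refine ⟨hg0, ?_⟩
    have : ((‖g ω‖₊ : ℝ≥0∞)) ^ 2 = ENNReal.ofReal (‖g ω‖ ^ 2) := by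
      rw [ENNReal.ofReal_pow (norm_nonneg _), ofReal_norm, enorm_eq_nnnorm]
    rw [this]
    have : ‖g ω‖ ^ 2 = (c ω + 1).toReal := by
      simp only [hgdef, Complex.norm_real, Real.norm_eq_abs, sq_abs]
      exact Real.sq_sqrt htpos.le
    rw [this, ENNReal.ofReal_toReal hne]
  have hhsq : ∀ᵐ ω ∂μ, ((‖h ω‖₊ : ℝ≥0∞)) ^ 2 = (‖F ω‖₊ : ℝ≥0∞) ^ 2 * (c ω + 1)⁻¹ := by
    filter_upwards [hgood] with ω ⟨hg0, hgsq⟩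
    have : ((‖h ω‖₊ : ℝ≥0∞)) ^ 2 = (‖F ω‖₊ : ℝ≥0∞) ^ 2 * (((‖g ω‖₊ : ℝ≥0∞)) ^ 2)⁻¹ := by
      have hgnn : (‖g ω‖₊ : ℝ≥0∞) ≠ 0 := by simpa using hg0
      rw [hhdef]
      simp only [nnnorm_mul, nnnorm_inv, ENNReal.coe_mul, mul_pow]
      rw [ENNReal.coe_inv (by simpa using hg0), ENNReal.inv_pow]
    rw [this, hgsq]
  have hFaem : AEMeasurable (fun ω => (‖F ω‖₊ : ℝ≥0∞) ^ 2) μ := hF.enorm.pow_const 2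
  have hcaem : AEMeasurable c μ := (hc.mono hG le_rfl).aemeasurable
  have hwmeas : Measurable[G] (fun ω => (c ω + 1)⁻¹) := (hc.add_const 1).inv
  have hbound : ∫⁻ ω, ((‖h ω‖₊ : ℝ≥0∞)) ^ 2 ∂μ ≤ 1 := by
    calc ∫⁻ ω, ((‖h ω‖₊ : ℝ≥0∞)) ^ 2 ∂μ
        = ∫⁻ ω, (‖F ω‖₊ : ℝ≥0∞) ^ 2 * (c ω + 1)⁻¹ ∂μ := lintegral_congr_ae hhsq
      _ ≤ ∫⁻ ω, c ω * (c ω + 1)⁻¹ ∂μ :=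
          key_le hG hFaem hcaem hdom hwmeas
      _ ≤ ∫⁻ _, 1 ∂μ := by
          refine lintegral_mono fun ω => ?_
          rw [← div_eq_mul_inv]
          exact ENNReal.div_le_of_le_mul (by simp)
      _ = 1 := by simp
  have hhaes : AEStronglyMeasurable[m0] h μ :=
    hF.mul (((hgmeas.mono hG le_rfl).inv).aestronglyMeasurable)
  have hhmem : MemLp h 2 μ := by
    refine ⟨hhaes, ?_⟩
    rw [eLpNorm_lt_top_iff_lintegral_rpow_enorm_lt_top two_ne_zero ENNReal.ofNat_ne_top]
    simp only [enorm_eq_nnnorm]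
    have : ∀ a : Ω, ((‖h a‖₊ : ℝ≥0∞)) ^ (2 : ℝ≥0∞).toReal = ((‖h a‖₊ : ℝ≥0∞)) ^ 2 := by
      intro a
      rw [ENNReal.toReal_ofNat, show ((2:ℝ) = ((2:ℕ):ℝ)) by norm_num, ENNReal.rpow_natCast]
    simp only [this]
    exact lt_of_le_of_lt hbound ENNReal.one_lt_top
  refine ⟨g, h, hgmeas, hhmem, ?_⟩
  filter_upwards [hgood] with ω ⟨hg0, _⟩
  rw [hhdef]
  field_simp

/-- The conditional Hilbert space `L²(F|G)`, consisting of the `F`-measurable complex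
functions with almost surely finite conditional second moment `E(|f|²|G) < ∞`, equals
`{ g·h : g G-measurable, h ∈ L²(μ) }`; in particular it is a module over the ring of
`G`-measurable complex functions. -/
theorem condL2_eq_products_and_module
    {Ω : Type*} (G : MeasurableSpace Ω) {m0 : MeasurableSpace Ω} {μ : Measure Ω} [IsProbabilityMeasure μ]
    (hG : G ≤ m0) :
    (∀ f : Ω → ℂ, AEStronglyMeasurable f μ →
      (HasFiniteCondSecondMoment m0 G μ f ↔
        ∃ g h : Ω → ℂ, Measurable[G] g ∧ MemLp h 2 μ ∧ f =ᵐ[μ] fun ω => g ω * h ω)) ∧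
    (∀ (a f : Ω → ℂ), Measurable[G] a → AEStronglyMeasurable f μ →
      HasFiniteCondSecondMoment m0 G μ f →
      HasFiniteCondSecondMoment m0 G μ (fun ω => a ω * f ω)) ∧
    (∀ f g : Ω → ℂ, AEStronglyMeasurable f μ → AEStronglyMeasurable g μ →
      HasFiniteCondSecondMoment m0 G μ f → HasFiniteCondSecondMoment m0 G μ g →
      HasFiniteCondSecondMoment m0 G μ (fun ω => f ω + g ω)) := by
  have part1 : ∀ f : Ω → ℂ, AEStronglyMeasurable f μ →
      (HasFiniteCondSecondMoment m0 G μ f ↔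
        ∃ g h : Ω → ℂ, Measurable[G] g ∧ MemLp h 2 μ ∧ f =ᵐ[μ] fun ω => g ω * h ω) := by
    intro f hf
    constructor
    · rintro ⟨c, hcm, hceq, hcfin⟩
      exact factor hG f hf c hcm hcfin (fun s hs => (hceq s hs).ge)
    · rintro ⟨g, h, hgm, hh, hfe⟩
      exact backward hG f g h hgm hh hfe
  refine ⟨part1, ?_, ?_⟩
  · intro a f ha hf hfm
    obtain ⟨g, h, hgm, hh, hfe⟩ := (part1 f hf).1 hfm
    refine backward hG _ (fun ω => a ω * g ω) h (ha.mul hgm) hh ?_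
    filter_upwards [hfe] with ω hω
    simp only [hω, mul_assoc]
  · intro f g hf hg ⟨c₁, hc₁m, hc₁eq, hc₁fin⟩ ⟨c₂, hc₂m, hc₂eq, hc₂fin⟩
    have hsum : AEStronglyMeasurable (fun ω => f ω + g ω) μ := hf.add hg
    obtain ⟨g₀, h₀, hg₀, hh₀, heq₀⟩ := factor hG _ hsum (fun ω => 2 * (c₁ ω + c₂ ω))
      ((hc₁m.add hc₂m).const_mul 2)
      (by
        filter_upwards [hc₁fin, hc₂fin] with ω h1 h2
        exact ENNReal.mul_lt_top ENNReal.ofNat_lt_top (ENNReal.add_lt_top.mpr ⟨h1, h2⟩))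
      (by
        intro s hs
        have hpt : ∀ ω, (‖f ω + g ω‖₊ : ℝ≥0∞) ^ 2
            ≤ 2 * ((‖f ω‖₊ : ℝ≥0∞) ^ 2 + (‖g ω‖₊ : ℝ≥0∞) ^ 2) := by
          intro ω
          have h1 : ‖f ω + g ω‖₊ ^ 2 ≤ 2 * (‖f ω‖₊ ^ 2 + ‖g ω‖₊ ^ 2) := by
            have := nnnorm_add_le (f ω) (g ω)
            have h2 : (‖f ω + g ω‖₊ : ℝ) ^ 2 ≤ 2 * ((‖f ω‖₊ : ℝ) ^ 2 + (‖g ω‖₊ : ℝ) ^ 2) := by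
              have h3 : (‖f ω + g ω‖₊ : ℝ) ≤ (‖f ω‖₊ : ℝ) + (‖g ω‖₊ : ℝ) := by
                exact_mod_cast this
              nlinarith [h3, NNReal.coe_nonneg (‖f ω + g ω‖₊), NNReal.coe_nonneg ‖f ω‖₊, NNReal.coe_nonneg ‖g ω‖₊, sq_nonneg ((‖f ω‖₊ : ℝ) - (‖g ω‖₊ : ℝ))]
            exact_mod_cast h2
          exact_mod_cast ENNReal.coe_le_coe.mpr h1
        calc ∫⁻ ω in s, (‖f ω + g ω‖₊ : ℝ≥0∞) ^ 2 ∂μ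
            ≤ ∫⁻ ω in s, 2 * ((‖f ω‖₊ : ℝ≥0∞) ^ 2 + (‖g ω‖₊ : ℝ≥0∞) ^ 2) ∂μ :=
              lintegral_mono fun ω => hpt ω
          _ = 2 * ((∫⁻ ω in s, (‖f ω‖₊ : ℝ≥0∞) ^ 2 ∂μ) + ∫⁻ ω in s, (‖g ω‖₊ : ℝ≥0∞) ^ 2 ∂μ) := by
              rw [lintegral_const_mul' _ _ (by simp), lintegral_add_left' (show AEMeasurable (fun ω => (‖f ω‖₊ : ℝ≥0∞) ^ 2) μ from hf.enorm.pow_const 2).restrict]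
          _ = 2 * ((∫⁻ ω in s, c₁ ω ∂μ) + ∫⁻ ω in s, c₂ ω ∂μ) := by
              rw [hc₁eq s hs, hc₂eq s hs]
          _ = ∫⁻ ω in s, 2 * (c₁ ω + c₂ ω) ∂μ := by
              rw [lintegral_const_mul' _ _ (by simp),
                lintegral_add_left' ((hc₁m.mono hG le_rfl).aemeasurable).restrict]
          )
    exact backward hG _ g₀ h₀ hg₀ hh₀ heq₀
end

section
/- Let G be a group acting on a Hilbert space H by unitary operators U_γ, and let H^G = {x ∈ H : U_γ x = x for all γ ∈ G} be the subspace of invariant vectors, with orthogonal projection P: H → H^G. Then for any f ∈ H, the projection Pf is the unique element of minimal norm in the closed convex hull of the orbit {U_γ f : γ ∈ G}. -/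
/-!
The closed convex hull `K` of the orbit of `f` is a nonempty closed convex subset of a Hilbert
space, so it has a unique element `m` of minimal norm. Each `U γ` permutes the orbit, hence maps
`K` into itself, and preserves norms, so `U γ m` is again a minimizer and equals `m`. For an
invariant `y`, `⟪y, U γ f⟫ = ⟪U γ y, U γ f⟫ = ⟪y, f⟫`, so the continuous linear functional
`⟪y, ·⟫` is constant on the orbit, hence on `K`; thus `⟪y, m⟫ = ⟪y, f⟫`, i.e. `f - m ⊥ y`.
-/

open Set

theorem Set.MapsTo.closure_convexHull {𝕜 E F : Type*} [Semiring 𝕜] [PartialOrder 𝕜]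
    [AddCommMonoid E] [Module 𝕜 E] [TopologicalSpace E]
    [AddCommMonoid F] [Module 𝕜 F] [TopologicalSpace F]
    (g : E →L[𝕜] F) {s : Set E} {t : Set F} (h : MapsTo g s t) :
    MapsTo g (closure (convexHull 𝕜 s)) (closure (convexHull 𝕜 t)) := by
  have hHull : MapsTo g (convexHull 𝕜 s) (convexHull 𝕜 t) := by
    rw [mapsTo_iff_image_subset, ← ContinuousLinearMap.coe_coe, LinearMap.image_convexHull]
    exact convexHull_mono h.image_subset
  exact hHull.closure g.continuous

theorem Convex.eq_of_forall_norm_le {E : Type*} [NormedAddCommGroup E] [NormedSpace ℝ E]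
    [StrictConvexSpace ℝ E] {K : Set E} (hK : Convex ℝ K) {x y : E} (hx : x ∈ K) (hy : y ∈ K)
    (hxmin : ∀ z ∈ K, ‖x‖ ≤ ‖z‖) (hymin : ∀ z ∈ K, ‖y‖ ≤ ‖z‖) : x = y := by
  by_contra hne
  have hnorm : ‖x‖ = ‖y‖ := le_antisymm (hxmin y hy) (hymin x hx)
  have hmid : (1 / 2 : ℝ) • (x + y) ∈ K := by
    rw [smul_add]
    exact hK hx hy (by norm_num) (by norm_num) (by norm_num)
  exact (hxmin _ hmid).not_gt ((norm_midpoint_lt_iff hnorm).2 hne)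

theorem exists_forall_norm_le_of_isClosed_convex {F : Type*} [NormedAddCommGroup F]
    [InnerProductSpace ℝ F] [CompleteSpace F] {K : Set F} (hne : K.Nonempty) (hc : IsClosed K)
    (hK : Convex ℝ K) : ∃ m ∈ K, ∀ x ∈ K, ‖m‖ ≤ ‖x‖ := by
  obtain ⟨m, hmK, hm⟩ := exists_norm_eq_iInf_of_complete_convex hne hc.isComplete hK 0
  refine ⟨m, hmK, fun x hx => ?_⟩
  have hle : ‖0 - m‖ ≤ ‖0 - x‖ :=
    hm ▸ ciInf_le ⟨0, forall_mem_range.2 fun _ => norm_nonneg _⟩ (⟨x, hx⟩ : K)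
  simpa using hle

section UnitaryRepresentation

variable {H : Type*} [NormedAddCommGroup H] [InnerProductSpace ℂ H] {Γ : Type*}
  (U : Γ → H ≃ₗᵢ[ℂ] H)

theorem mapsTo_closure_convexHull_orbit [Mul Γ]
    (hU : ∀ γ₁ γ₂ : Γ, ∀ x : H, U (γ₁ * γ₂) x = U γ₁ (U γ₂ x)) (f : H) (γ : Γ) :
    MapsTo (U γ) (closure (convexHull ℝ (range fun γ => U γ f)))
      (closure (convexHull ℝ (range fun γ => U γ f))) := by
  refine Set.MapsTo.closure_convexHull
    (((U γ).toContinuousLinearEquiv : H →L[ℂ] H).restrictScalars ℝ) ?_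
  rintro _ ⟨γ', rfl⟩
  exact ⟨γ * γ', hU γ γ' f⟩

theorem inner_eq_of_mem_closure_convexHull_orbit (f : H) {y : H} (hy : ∀ γ : Γ, U γ y = y)
    {x : H} (hx : x ∈ closure (convexHull ℝ (range fun γ => U γ f))) :
    inner ℂ y x = inner ℂ y f := by
  have hOrbit : MapsTo ((innerSL ℂ y).restrictScalars ℝ) (range fun γ => U γ f)
      {inner ℂ y f} := by
    rintro _ ⟨γ, rfl⟩
    simpa [hy γ] using (U γ).inner_map_map y f
  simpa [convexHull_singleton] using hOrbit.closure_convexHull _ hx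

end UnitaryRepresentation

/-- Alaoglu–Birkhoff abstract ergodic theorem: if a group `Γ` acts on a Hilbert space `H`
by unitary operators `U γ`, then for any `f ∈ H` the closed convex hull of the orbit
`{U γ f}` contains a unique element of minimal norm, and this element is the orthogonal
projection of `f` onto the subspace of invariant vectors (it is invariant, and `f` minus
it is orthogonal to every invariant vector). -/
theorem alaoglu_birkhoff
    {H : Type*} [NormedAddCommGroup H] [InnerProductSpace ℂ H] [CompleteSpace H]
    {Γ : Type*} [Group Γ] (U : Γ → H ≃ₗᵢ[ℂ] H)
    (hU : ∀ γ₁ γ₂ : Γ, ∀ x : H, U (γ₁ * γ₂) x = U γ₁ (U γ₂ x))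
    (f : H) :
    ∃ m : H, m ∈ closure (convexHull ℝ (Set.range fun γ => U γ f)) ∧
      (∀ x ∈ closure (convexHull ℝ (Set.range fun γ => U γ f)), ‖m‖ ≤ ‖x‖) ∧
      (∀ m' ∈ closure (convexHull ℝ (Set.range fun γ => U γ f)),
        (∀ x ∈ closure (convexHull ℝ (Set.range fun γ => U γ f)), ‖m'‖ ≤ ‖x‖) → m' = m) ∧
      (∀ γ : Γ, U γ m = m) ∧
      (∀ y : H, (∀ γ : Γ, U γ y = y) → inner ℂ (f - m) y = (0 : ℂ)) := by
  set K := closure (convexHull ℝ (range fun γ => U γ f))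
  let _ : InnerProductSpace ℝ H := InnerProductSpace.rclikeToReal ℂ H
  have hK : Convex ℝ K := (convex_convexHull ℝ _).closure
  have hne : K.Nonempty := ⟨U 1 f, subset_closure (subset_convexHull ℝ _ ⟨1, rfl⟩)⟩
  obtain ⟨m, hmK, hmin⟩ := exists_forall_norm_le_of_isClosed_convex hne isClosed_closure hK
  have huniq : ∀ m' ∈ K, (∀ x ∈ K, ‖m'‖ ≤ ‖x‖) → m' = m := fun m' hm'K hm'min =>
    hK.eq_of_forall_norm_le hm'K hmK hm'min hmin
  refine ⟨m, hmK, hmin, huniq, fun γ => ?_, fun y hy => ?_⟩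
  · refine huniq _ (mapsTo_closure_convexHull_orbit U hU f γ hmK) fun x hx => ?_
    simpa using hmin x hx
  · rw [inner_sub_left, ← inner_conj_symm f y, ← inner_conj_symm m y,
      inner_eq_of_mem_closure_convexHull_orbit U f hy hmK, sub_self]
end

section
/- Let π: (X, μ) → (Y, ν) be a factor of probability spaces with disintegration (μ_y), and let K be a bounded measurable kernel on the relatively independent product X ×_Y X, bounded by C > 0. Let M be a countable set of functions in the conditional Hilbert space over Y which is conditionally orthonormal: E(f ḡ|Y) = 0 for distinct f, g ∈ M and E(|f|²|Y) = 1_E for some measurable E (depending on f) for each f ∈ M. Then Σ_{f∈M} ‖K ∗_Y f‖²_{L²(X)} ≤ C² < ∞. -/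
open MeasureTheory ProbabilityTheory
open scoped ENNReal InnerProductSpace ComplexConjugate

/-!
For a fixed `x`, the numbers `(K ∗_Y F i)(x)` are the inner products of `K x ·` with the
conjugates of the `F i` in `L²(μ_{π x})`, where these form an orthogonal family of unit or zero
vectors for almost every fibre. Bessel's inequality bounds their squared sum by
`‖K x ·‖²_{L²(μ_{π x})} ≤ C²`, and integrating in `x` (monotone convergence) gives the claim.
-/

theorem Orthonormal.tsum_enorm_inner_sq_le {𝕜 E ι : Type*} [RCLike 𝕜] [SeminormedAddCommGroup E]
    [InnerProductSpace 𝕜 E] {v : ι → E} (hv : Orthonormal 𝕜 v) (x : E) :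
    ∑' i, ‖⟪v i, x⟫_𝕜‖ₑ ^ 2 ≤ ‖x‖ₑ ^ 2 := by
  rw [ENNReal.tsum_eq_iSup_sum]
  refine iSup_le fun s => ?_
  simp only [← ofReal_norm, ← ENNReal.ofReal_pow (norm_nonneg _)]
  rw [← ENNReal.ofReal_sum_of_nonneg fun i _ => by positivity]
  exact ENNReal.ofReal_le_ofReal (hv.sum_inner_products_le x)

theorem tsum_enorm_inner_sq_le_of_orthogonal {𝕜 E ι : Type*} [RCLike 𝕜] [SeminormedAddCommGroup E]
    [InnerProductSpace 𝕜 E] {v : ι → E} (horth : Pairwise fun i j => ⟪v i, v j⟫_𝕜 = 0)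
    (hnorm : ∀ i, v i = 0 ∨ ‖v i‖ = 1) (x : E) :
    ∑' i, ‖⟪v i, x⟫_𝕜‖ₑ ^ 2 ≤ ‖x‖ₑ ^ 2 := by
  set s : Set ι := {i | v i ≠ 0}
  have hunit : Orthonormal 𝕜 fun i : s => v i :=
    ⟨fun i => (hnorm i).resolve_left i.2, fun i j hij => horth (Subtype.coe_ne_coe.mpr hij)⟩
  rw [← tsum_subtype_eq_of_support_subset (s := s)]
  · exact hunit.tsum_enorm_inner_sq_le x
  · intro i hi hzero
    simp [show v i = 0 by simpa [s] using hzero] at hi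

theorem eLpNorm_two_sq {α ε : Type*} [MeasurableSpace α] [ENorm ε] (μ : Measure α) (f : α → ε) :
    eLpNorm f 2 μ ^ 2 = ∫⁻ x, ‖f x‖ₑ ^ 2 ∂μ := by
  simpa using eLpNorm_nnreal_pow_eq_lintegral (μ := μ) (f := f) (p := 2) two_ne_zero

theorem eLpNorm_two_eq_zero_or_one {α ε : Type*} [MeasurableSpace α] [ENorm ε] {μ : Measure α}
    {f : α → ε} (h : ∫⁻ x, ‖f x‖ₑ ^ 2 ∂μ = 0 ∨ ∫⁻ x, ‖f x‖ₑ ^ 2 ∂μ = 1) :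
    eLpNorm f 2 μ = 0 ∨ eLpNorm f 2 μ = 1 := by
  rw [← eLpNorm_two_sq] at h
  rcases h with h | h
  · exact .inl (pow_eq_zero_iff two_ne_zero |>.mp h)
  · exact .inr ((ENNReal.pow_right_strictMono two_ne_zero).injective (h.trans (one_pow 2).symm))

theorem tsum_enorm_integral_mul_sq_le {X ι : Type*} [MeasurableSpace X] {ρ : Measure X}
    {F : ι → X → ℂ} (hF : ∀ i, AEStronglyMeasurable (F i) ρ)
    (horth : Pairwise fun i j => ∫ x, F i x * conj (F j x) ∂ρ = 0)
    (hnorm : ∀ i, eLpNorm (F i) 2 ρ = 0 ∨ eLpNorm (F i) 2 ρ = 1) {v : X → ℂ} (hv : MemLp v 2 ρ) :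
    ∑' i, ‖∫ x, v x * F i x ∂ρ‖ₑ ^ 2 ≤ eLpNorm v 2 ρ ^ 2 := by
  have hFL2 (i : ι) : MemLp (star (F i)) 2 ρ :=
    MemLp.star ⟨hF i, by rcases hnorm i with h | h <;> simp [h]⟩
  set e : ι → Lp ℂ 2 ρ := fun i => (hFL2 i).toLp
  have inner_e (i : ι) (g : Lp ℂ 2 ρ) : ⟪e i, g⟫_ℂ = ∫ x, F i x * g x ∂ρ := by
    rw [L2.inner_def]
    refine integral_congr_ae ?_
    filter_upwards [(hFL2 i).coeFn_toLp] with x hx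
    simp [e, hx, mul_comm]
  have horth_e : Pairwise fun i j => ⟪e i, e j⟫_ℂ = 0 := by
    intro i j hij
    rw [inner_e, ← horth hij]
    refine integral_congr_ae ?_
    filter_upwards [(hFL2 j).coeFn_toLp] with x hx
    simp [e, hx]
  have hnorm_e (i : ι) : e i = 0 ∨ ‖e i‖ = 1 := by
    rw [← norm_eq_zero, Lp.norm_toLp, eLpNorm_star]
    rcases hnorm i with h | h <;> simp [h]
  calc ∑' i, ‖∫ x, v x * F i x ∂ρ‖ₑ ^ 2 = ∑' i, ‖⟪e i, hv.toLp v⟫_ℂ‖ₑ ^ 2 := by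
        refine tsum_congr fun i => ?_
        rw [inner_e, integral_congr_ae ?_]
        filter_upwards [hv.coeFn_toLp] with x hx
        rw [hx, mul_comm]
    _ ≤ ‖hv.toLp v‖ₑ ^ 2 := tsum_enorm_inner_sq_le_of_orthogonal horth_e hnorm_e _
    _ = eLpNorm v 2 ρ ^ 2 := by rw [Lp.enorm_toLp]

theorem tsum_enorm_integral_mul_sq_le_of_norm_le {X ι : Type*} [MeasurableSpace X]
    {ρ : Measure X} [IsProbabilityMeasure ρ] {F : ι → X → ℂ}
    (hF : ∀ i, AEStronglyMeasurable (F i) ρ)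
    (horth : Pairwise fun i j => ∫ x, F i x * conj (F j x) ∂ρ = 0)
    (hnorm : ∀ i, eLpNorm (F i) 2 ρ = 0 ∨ eLpNorm (F i) 2 ρ = 1) {v : X → ℂ}
    (hv : AEStronglyMeasurable v ρ) {C : ℝ} (hC : 0 ≤ C) (hvC : ∀ᵐ x ∂ρ, ‖v x‖ ≤ C) :
    ∑' i, ‖∫ x, v x * F i x ∂ρ‖ₑ ^ 2 ≤ ENNReal.ofReal (C ^ 2) :=
  calc ∑' i, ‖∫ x, v x * F i x ∂ρ‖ₑ ^ 2
      ≤ eLpNorm v 2 ρ ^ 2 := tsum_enorm_integral_mul_sq_le hF horth hnorm (.of_bound hv C hvC)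
    _ ≤ ENNReal.ofReal C ^ 2 := by
        gcongr
        simpa using eLpNorm_le_of_ae_bound (p := 2) hvC
    _ = ENNReal.ofReal (C ^ 2) := (ENNReal.ofReal_pow hC 2).symm

theorem ProbabilityTheory.Kernel.map_bind_eq_of_ae_fiber {X Y : Type*} [MeasurableSpace X]
    [MeasurableSpace Y] {ν : Measure Y} {κ : Kernel Y X} [IsMarkovKernel κ] {π : X → Y}
    (hπ : Measurable π) (hsupp : ∀ᵐ y ∂ν, ∀ᵐ x ∂κ y, π x = y) :
    (ν.bind fun y => κ y).map π = ν := by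
  ext s hs
  rw [Measure.map_apply hπ hs, Measure.bind_apply (hπ hs) κ.aemeasurable,
    ← lintegral_indicator_one hs]
  refine lintegral_congr_ae ?_
  filter_upwards [hsupp] with y hy
  rw [← Measure.map_apply hπ hs, Measure.map_congr hy, Measure.map_const, measure_univ, one_smul,
    Measure.dirac_apply' _ hs]

theorem conditional_bessel_sum_bound_general
    {X Y : Type*} [MeasurableSpace X] [MeasurableSpace Y]
    (μ : Measure X) (ν : Measure Y) [IsProbabilityMeasure μ]
    (π : X → Y) (hπ : Measurable π)
    (κ : Kernel Y X) [IsMarkovKernel κ]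
    (hμ : μ = ν.bind fun y => κ y)
    (hsupp : ∀ᵐ y ∂ν, ∀ᵐ x ∂κ y, π x = y)
    (K : X → X → ℂ) (hK : Measurable (Function.uncurry K))
    (C : ℝ) (hC : 0 < C) (hKb : ∀ x x', ‖K x x'‖ ≤ C)
    (F : ℕ → X → ℂ) (hFm : ∀ i, Measurable (F i))
    (horth : ∀ i j : ℕ, i ≠ j →
      ∀ᵐ y ∂ν, ∫ x, F i x * (starRingEnd ℂ) (F j x) ∂κ y = 0)
    (hnorm : ∀ i : ℕ, ∃ E : Set Y, MeasurableSet E ∧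
      ∀ᵐ y ∂ν, ∫⁻ x, (‖F i x‖₊ : ℝ≥0∞) ^ 2 ∂κ y =
        E.indicator (fun _ => (1 : ℝ≥0∞)) y) :
    ∑' i : ℕ, ∫⁻ x, (‖∫ x', K x x' * F i x' ∂κ (π x)‖₊ : ℝ≥0∞) ^ 2 ∂μ ≤
      ENNReal.ofReal (C ^ 2) := by
  simp_rw [← enorm_eq_nnnorm] at hnorm ⊢
  have horth_ae : ∀ᵐ y ∂ν, Pairwise fun i j => ∫ x, F i x * conj (F j x) ∂κ y = 0 :=
    ae_all_iff.2 fun i => ae_all_iff.2 fun j => Filter.eventually_imp_distrib_left.2 (horth i j)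
  have hnorm_ae : ∀ᵐ y ∂ν, ∀ i, eLpNorm (F i) 2 (κ y) = 0 ∨ eLpNorm (F i) 2 (κ y) = 1 :=
    ae_all_iff.2 fun i => by
      obtain ⟨E, -, hE⟩ := hnorm i
      filter_upwards [hE] with y hy
      exact eLpNorm_two_eq_zero_or_one (hy ▸ E.indicator_eq_zero_or_self _ y)
  have hμπ : μ.map π = ν := hμ ▸ Kernel.map_bind_eq_of_ae_fiber hπ hsupp
  have hfibre :
      ∀ᵐ x ∂μ, ∑' i, ‖∫ x', K x x' * F i x' ∂κ (π x)‖ₑ ^ 2 ≤ ENNReal.ofReal (C ^ 2) := by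
    rw [← hμπ] at horth_ae hnorm_ae
    filter_upwards [ae_of_ae_map hπ.aemeasurable horth_ae, ae_of_ae_map hπ.aemeasurable hnorm_ae]
      with x hxorth hxnorm
    exact tsum_enorm_integral_mul_sq_le_of_norm_le (fun i => (hFm i).aestronglyMeasurable)
      hxorth hxnorm hK.of_uncurry_left.aestronglyMeasurable hC.le (.of_forall (hKb x))
  have hmeas (i : ℕ) : Measurable fun x => ∫ x', K x x' * F i x' ∂κ (π x) :=
    ((hK.mul ((hFm i).comp measurable_snd)).stronglyMeasurable.integral_kernel_prod_right'
      (κ := κ.comap π hπ)).measurable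
  rw [← lintegral_tsum fun i => (hmeas i).enorm.pow_const 2 |>.aemeasurable]
  calc ∫⁻ x, ∑' i, ‖∫ x', K x x' * F i x' ∂κ (π x)‖ₑ ^ 2 ∂μ
      ≤ ∫⁻ _, ENNReal.ofReal (C ^ 2) ∂μ := lintegral_mono_ae hfibre
    _ = ENNReal.ofReal (C ^ 2) := by simp

/-- Conditional Bessel bound: if `K` is a kernel on the relatively independent product
bounded by `C > 0` and `(F i)` is a countable conditionally orthonormal family
(fibrewise orthogonal, with fibrewise squared norm an indicator `1_E`), then
`Σ_i ‖K ∗_Y F i‖²_{L²(X)} ≤ C²`. -/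
theorem conditional_bessel_sum_bound
    {X Y : Type*} [MeasurableSpace X] [MeasurableSpace Y]
    (μ : Measure X) (ν : Measure Y) [IsProbabilityMeasure μ] [IsProbabilityMeasure ν]
    (π : X → Y) (hπ : Measurable π)
    (κ : Kernel Y X) [IsMarkovKernel κ]
    (hμ : μ = ν.bind fun y => κ y)
    (hsupp : ∀ᵐ y ∂ν, ∀ᵐ x ∂κ y, π x = y)
    (K : X → X → ℂ) (hK : Measurable (Function.uncurry K))
    (C : ℝ) (hC : 0 < C) (hKb : ∀ x x', ‖K x x'‖ ≤ C)
    (F : ℕ → X → ℂ) (hFm : ∀ i, Measurable (F i))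
    (horth : ∀ i j : ℕ, i ≠ j →
      ∀ᵐ y ∂ν, ∫ x, F i x * (starRingEnd ℂ) (F j x) ∂κ y = 0)
    (hnorm : ∀ i : ℕ, ∃ E : Set Y, MeasurableSet E ∧
      ∀ᵐ y ∂ν, ∫⁻ x, (‖F i x‖₊ : ℝ≥0∞) ^ 2 ∂κ y =
        E.indicator (fun _ => (1 : ℝ≥0∞)) y) :
    ∑' i : ℕ, ∫⁻ x, (‖∫ x', K x x' * F i x' ∂κ (π x)‖₊ : ℝ≥0∞) ^ 2 ∂μ ≤
      ENNReal.ofReal (C ^ 2) :=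
  conditional_bessel_sum_bound_general μ ν π hπ κ hμ hsupp K hK C hC hKb F hFm horth hnorm
end

section
/- Let π: (X, μ) → (Y, ν) be a factor of probability spaces, and let f ∈ L²(X) be non-zero. Then for every ε > 0 there exists g of the form g = h·f with h ∈ L^∞(Y) such that E(|g|²|Y) = 1_E for some non-null measurable set E ⊆ Y, and ‖f − E(f ḡ|Y)·g‖_{L²(X)} < ε. -/
/-!
Put `φ = E(‖f‖² | G)`, `E = {a ≤ φ ≤ b}` and `h = 1_E φ^(-1/2)`, which is bounded since `a > 0`.
Pulling the `G`-measurable `h` out of the conditional expectations gives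
`E(‖h f‖² | G) = ‖h‖² φ = 1_E` and `E(f · conj (h f) | G) = φ · conj h`, so the residual
`f - E(f ḡ | G) g` is exactly `1_{Eᶜ} f`, whose squared `L²`-norm is `∫_{Eᶜ} φ`. Since `φ ≥ 0` is
integrable, this tail tends to `0` as `a → 0`, `b → ∞`; once it is below `∫ φ = ‖f‖₂² > 0`,
the set `E` cannot be null.
-/

open MeasureTheory ComplexConjugate

namespace MeasureTheory

variable {Ω : Type*} {m0 : MeasurableSpace Ω} {μ : Measure Ω}

lemma integral_norm_sq_pos {F : Type*} [NormedAddCommGroup F] {f : Ω → F}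
    (hf : MemLp f 2 μ) (hf0 : ¬ f =ᵐ[μ] 0) : 0 < ∫ ω, ‖f ω‖ ^ 2 ∂μ := by
  refine (integral_nonneg fun ω => by positivity).lt_of_ne' fun h0 => hf0 ?_
  filter_upwards [(integral_eq_zero_iff_of_nonneg (fun ω => by positivity)
    (hf.integrable_norm_pow two_ne_zero)).1 h0] with ω hω
  simpa using hω

lemma MemLp.eLpNorm_two_lt_ofReal_iff {F : Type*} [NormedAddCommGroup F] {f : Ω → F}
    (hf : MemLp f 2 μ) {ε : ℝ} (hε : 0 < ε) :
    eLpNorm f 2 μ < ENNReal.ofReal ε ↔ ∫ ω, ‖f ω‖ ^ 2 ∂μ < ε ^ 2 := by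
  rw [hf.eLpNorm_eq_integral_rpow_norm two_ne_zero ENNReal.ofNat_ne_top,
    ENNReal.ofReal_lt_ofReal_iff hε, ENNReal.toReal_ofNat, ← one_div, ← Real.sqrt_eq_rpow,
    Real.sqrt_lt' hε]
  simp_rw [Real.rpow_two]

lemma exists_setIntegral_compl_preimage_Icc_lt {φ : Ω → ℝ} (hφm : Measurable φ)
    (hφi : Integrable φ μ) (hφ0 : 0 ≤ᵐ[μ] φ) {δ : ℝ} (hδ : 0 < δ) :
    ∃ a b : ℝ, 0 < a ∧ ∫ ω in (φ ⁻¹' Set.Icc a b)ᶜ, φ ω ∂μ < δ := by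
  set S : ℕ → Set Ω := fun n => (φ ⁻¹' Set.Icc ((n : ℝ) + 1)⁻¹ n)ᶜ
  have hS_meas : ∀ n, MeasurableSet (S n) := fun n => (hφm measurableSet_Icc).compl
  have hS_anti : Antitone S := fun n k hnk => by
    refine Set.compl_subset_compl.2 (Set.preimage_mono (Set.Icc_subset_Icc ?_ ?_))
    · gcongr
    · exact_mod_cast hnk
  have hS_inter : (⋂ n, S n) ⊆ φ ⁻¹' Set.Iic 0 := by
    intro ω hω
    show φ ω ≤ 0
    by_contra! hpos
    obtain ⟨n, hn⟩ := exists_nat_ge (max (φ ω) (φ ω)⁻¹)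
    refine Set.mem_iInter.1 hω n ⟨?_, (le_max_left _ _).trans hn⟩
    rw [inv_le_comm₀ (by positivity) hpos]
    linarith [le_max_right (φ ω) (φ ω)⁻¹]
  have h_lim : ∫ ω in ⋂ n, S n, φ ω ∂μ = 0 := by
    refine integral_eq_zero_of_ae ?_
    filter_upwards [ae_restrict_mem (MeasurableSet.iInter hS_meas), ae_restrict_of_ae hφ0]
      with ω hω hω0
    exact le_antisymm (hS_inter hω) hω0
  have h_tendsto := tendsto_setIntegral_of_antitone hS_meas hS_anti ⟨0, hφi.integrableOn⟩
  rw [h_lim] at h_tendsto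
  obtain ⟨n, hn⟩ := (h_tendsto.eventually_lt_const hδ).exists
  exact ⟨_, _, by positivity, hn⟩

variable {G : MeasurableSpace Ω} {f h : Ω → ℂ}

lemma condExp_norm_mul_sq (hG : G ≤ m0) (hh : StronglyMeasurable[G] h) {C : ℝ}
    (hC : ∀ ω, ‖h ω‖ ≤ C) (hf : MemLp f 2 μ) :
    μ[fun ω => ‖h ω * f ω‖ ^ 2|G] =ᵐ[μ] fun ω => ‖h ω‖ ^ 2 * μ[fun ω => ‖f ω‖ ^ 2|G] ω := by
  have hh2 : StronglyMeasurable[G] fun ω => ‖h ω‖ ^ 2 := hh.norm.pow 2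
  have hf2 : Integrable (fun ω => ‖f ω‖ ^ 2) μ := hf.integrable_norm_pow two_ne_zero
  have hhf2 : Integrable (fun ω => ‖h ω‖ ^ 2 * ‖f ω‖ ^ 2) μ :=
    hf2.bdd_mul (hh2.mono hG).aestronglyMeasurable
      (ae_of_all _ fun ω => by simpa using pow_le_pow_left₀ (norm_nonneg _) (hC ω) 2)
  simp_rw [norm_mul, mul_pow]
  exact condExp_mul_of_stronglyMeasurable_left hh2 hhf2 hf2

lemma condExp_mul_conj_mul (hG : G ≤ m0) (hh : StronglyMeasurable[G] h) {C : ℝ}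
    (hC : ∀ ω, ‖h ω‖ ≤ C) (hf : MemLp f 2 μ) :
    μ[fun ω => f ω * conj (h ω * f ω)|G] =ᵐ[μ]
      fun ω => μ[fun ω => ‖f ω‖ ^ 2|G] ω • conj (h ω) := by
  have hfg : (fun ω => f ω * conj (h ω * f ω)) = fun ω => ‖f ω‖ ^ 2 • conj (h ω) := by
    ext ω
    rw [map_mul, Complex.real_smul, Complex.ofReal_pow, ← Complex.mul_conj']
    ring
  have hf2 : Integrable (fun ω => ‖f ω‖ ^ 2) μ := hf.integrable_norm_pow two_ne_zero
  rw [hfg]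
  exact condExp_smul_of_aestronglyMeasurable_right hf2
    (hf2.smul_bdd C (hh.star.mono hG).aestronglyMeasurable
      (ae_of_all _ fun ω => by simpa using hC ω))
    hh.star.aestronglyMeasurable

lemma sub_condExp_mul_conj_mul_mul_ae_eq (hG : G ≤ m0) (hh : StronglyMeasurable[G] h) {C : ℝ}
    (hC : ∀ ω, ‖h ω‖ ≤ C) (hf : MemLp f 2 μ) :
    (fun ω => f ω - μ[fun ω' => f ω' * conj (h ω' * f ω')|G] ω * (h ω * f ω)) =ᵐ[μ]
      fun ω => ((1 - ‖h ω‖ ^ 2 * μ[fun ω => ‖f ω‖ ^ 2|G] ω : ℝ) : ℂ) * f ω := by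
  filter_upwards [condExp_mul_conj_mul hG hh hC hf] with ω hω
  rw [hω, Complex.real_smul]
  push_cast
  rw [← Complex.conj_mul']
  ring

lemma eLpNorm_sub_condExp_mul_conj_mul_mul_lt [IsFiniteMeasure μ] (hG : G ≤ m0)
    (hh : StronglyMeasurable[G] h) {C : ℝ} (hC : ∀ ω, ‖h ω‖ ≤ C) (hf : MemLp f 2 μ)
    {E : Set Ω} (hEG : MeasurableSet[G] E)
    (hE : ∀ ω, ‖h ω‖ ^ 2 * μ[fun ω => ‖f ω‖ ^ 2|G] ω = E.indicator (fun _ => 1) ω)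
    {ε : ℝ} (hε : 0 < ε) (htail : ∫ ω in Eᶜ, μ[fun ω => ‖f ω‖ ^ 2|G] ω ∂μ < ε ^ 2) :
    eLpNorm (fun ω => f ω - μ[fun ω' => f ω' * conj (h ω' * f ω')|G] ω * (h ω * f ω)) 2 μ
      < ENNReal.ofReal ε := by
  have hres : (fun ω => f ω - μ[fun ω' => f ω' * conj (h ω' * f ω')|G] ω * (h ω * f ω))
      =ᵐ[μ] Eᶜ.indicator f := by
    filter_upwards [sub_condExp_mul_conj_mul_mul_ae_eq hG hh hC hf] with ω hω
    rw [hω, hE ω]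
    by_cases hωE : ω ∈ E <;> simp [hωE]
  rw [eLpNorm_congr_ae hres, eLpNorm_indicator_eq_eLpNorm_restrict (hG _ hEG.compl),
    (hf.restrict _).eLpNorm_two_lt_ofReal_iff hε,
    ← setIntegral_condExp hG (hf.integrable_norm_pow two_ne_zero) hEG.compl]
  exact htail

end MeasureTheory

section

variable {α : Type*} {s : Set α} {φ : α → ℝ}

lemma norm_indicator_inv_sqrt_le {a : ℝ} (ha : 0 < a) (hs : ∀ x ∈ s, a ≤ φ x) (x : α) :
    ‖s.indicator (fun x => (((√(φ x))⁻¹ : ℝ) : ℂ)) x‖ ≤ (√a)⁻¹ := by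
  by_cases hx : x ∈ s
  · rw [Set.indicator_of_mem hx, Complex.norm_real, Real.norm_of_nonneg (by positivity)]
    exact inv_anti₀ (by positivity) (Real.sqrt_le_sqrt (hs x hx))
  · rw [Set.indicator_of_notMem hx, norm_zero]
    positivity

lemma norm_indicator_inv_sqrt_sq_mul (hs : ∀ x ∈ s, 0 < φ x) (x : α) :
    ‖s.indicator (fun x => (((√(φ x))⁻¹ : ℝ) : ℂ)) x‖ ^ 2 * φ x = s.indicator (fun _ => 1) x := by
  by_cases hx : x ∈ s
  · rw [Set.indicator_of_mem hx, Set.indicator_of_mem hx, Complex.norm_real, Real.norm_eq_abs,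
      sq_abs, inv_pow, Real.sq_sqrt (hs x hx).le, inv_mul_cancel₀ (hs x hx).ne']
  · simp [hx]

end

/-- Conditional normalization lemma: for a non-zero `f ∈ L²(X)` and any `ε > 0`, there is
`g = h·f` with `h` a bounded `G`-measurable function such that the conditional second
moment `E(|g|²|G)` is the indicator of a non-null `G`-measurable set and
`‖f − E(f ḡ|G)·g‖_{L²} < ε`. -/
theorem conditional_normalization
    {Ω : Type*} {m0 : MeasurableSpace Ω} {μ : Measure Ω} [IsProbabilityMeasure μ]
    (G : MeasurableSpace Ω) (hG : G ≤ m0)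
    (f : Ω → ℂ) (hf : MemLp f 2 μ) (hf0 : ¬ f =ᵐ[μ] 0)
    (ε : ℝ) (hε : 0 < ε) :
    ∃ h : Ω → ℂ, Measurable[G] h ∧ (∃ C : ℝ, ∀ ω, ‖h ω‖ ≤ C) ∧
      ∃ E : Set Ω, MeasurableSet[G] E ∧ μ E ≠ 0 ∧
        (μ[fun ω => ‖h ω * f ω‖ ^ 2|G]) =ᵐ[μ] E.indicator (fun _ => (1 : ℝ)) ∧
        eLpNorm (fun ω => f ω -
            (μ[fun ω' => f ω' * (starRingEnd ℂ) (h ω' * f ω')|G]) ω * (h ω * f ω)) 2 μ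
          < ENNReal.ofReal ε := by
  set φ := μ[fun ω => ‖f ω‖ ^ 2|G]
  have hφG : StronglyMeasurable[G] φ := stronglyMeasurable_condExp
  have hφ_pos : 0 < ∫ ω, φ ω ∂μ := by
    rw [integral_condExp hG]
    exact integral_norm_sq_pos hf hf0
  obtain ⟨a, b, ha, htail⟩ := exists_setIntegral_compl_preimage_Icc_lt (hφG.mono hG).measurable
    integrable_condExp (condExp_nonneg (ae_of_all _ fun ω => by positivity))
    (lt_min (pow_pos hε 2) hφ_pos)
  set E := φ ⁻¹' Set.Icc a b
  have hEG : MeasurableSet[G] E := hφG.measurable measurableSet_Icc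
  set h : Ω → ℂ := E.indicator fun ω => (((√(φ ω))⁻¹ : ℝ) : ℂ)
  have hhG : Measurable[G] h :=
    (Complex.measurable_ofReal.comp hφG.measurable.sqrt.inv).indicator hEG
  have hh_le := norm_indicator_inv_sqrt_le ha (s := E) fun ω hω => hω.1
  have hnorm := norm_indicator_inv_sqrt_sq_mul (s := E) fun ω hω => ha.trans_le hω.1
  refine ⟨h, hhG, ⟨_, hh_le⟩, E, hEG, fun hE0 => ?_, ?_, ?_⟩
  · rw [Measure.restrict_eq_self_of_ae_mem (s := Eᶜ) (measure_eq_zero_iff_ae_notMem.1 hE0)]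
      at htail
    exact (htail.trans_le (min_le_right _ _)).false
  · exact (condExp_norm_mul_sq hG hhG.stronglyMeasurable hh_le hf).trans (ae_of_all _ hnorm)
  · exact eLpNorm_sub_condExp_mul_conj_mul_mul_lt hG hhG.stronglyMeasurable hh_le hf hEG hnorm hε
      (htail.trans_le (min_le_left _ _))
end

section
/- Let G be a group acting by measure-preserving transformations on a probability space X over a factor Y, and suppose f ∈ L²(X) with E(f|Y) = 0 is not relatively weakly mixing, i.e., there is ε > 0 such that ‖E((T^γ)*f · f̄ | Y)‖_{L²(Y)}² ≥ ε for all γ ∈ G. Then the element K of minimal norm in the closed convex hull of the orbit {(T^γ×T^γ)*(f ⊗ f̄) : γ ∈ G} in L²(X ×_Y X) is G-invariant and non-zero, with ‖K‖²_{L²(X×_Y X)} ≥ ε. -/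
open MeasureTheory ProbabilityTheory Filter
open scoped ENNReal BigOperators RealInnerProductSpace

/-!
The diagonal action `T γ × T γ` preserves the relatively independent product `X ×_Y X`: the fibre
measures are equivariant, `κ y (T γ ⁻¹' A) = κ (Sa γ y) A` for a.e. `y`, since both sides have the
same integral over every measurable subset of `Y`. So composition with `T γ × T γ` is an isometry
`U γ` of `L²(X ×_Y X)`, and the orbit `F_γ = U γ (f ⊗ f̄)` satisfies `U γ F_δ = F_{γδ}` and
`⟪F_b, F_c⟫ = ⟪f ⊗ f̄, F_{b⁻¹c}⟫ = ‖E((T^{b⁻¹c})*f · f̄ | Y)‖² ≥ ε`. The minimal-norm point `K` of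
the closed convex hull of the orbit is unique, so every `U γ`, which maps the hull into itself,
fixes it (Alaoglu–Birkhoff); and the bound `⟪u, v⟫ ≥ ε` passes from the orbit to its closed convex
hull, giving `‖K‖² ≥ ε`.
-/

section Hilbert

variable {E : Type*} [NormedAddCommGroup E] [InnerProductSpace ℝ E]

theorem Convex.eq_of_forall_norm_le_s18 {S : Set E} (hS : Convex ℝ S) {K w : E} (hK : K ∈ S)
    (hw : w ∈ S) (hmin : ∀ v ∈ S, ‖K‖ ≤ ‖v‖) (hwK : ‖w‖ ≤ ‖K‖) : w = K := by
  have hmid : ‖K‖ ≤ ‖K + w‖ / 2 := by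
    have := hmin _ (hS hK hw (by norm_num : (0 : ℝ) ≤ 1 / 2) (by norm_num : (0 : ℝ) ≤ 1 / 2)
      (by norm_num))
    rwa [← smul_add, norm_smul, Real.norm_of_nonneg (by norm_num), one_div_mul_eq_div] at this
  have hpar := parallelogram_law_with_norm ℝ K w
  have : ‖K - w‖ = 0 := by nlinarith [norm_nonneg K, norm_nonneg w, norm_nonneg (K - w)]
  exact (sub_eq_zero.mp (norm_eq_zero.mp this)).symm

theorem exists_mem_forall_norm_le [CompleteSpace E] {S : Set E} (hne : S.Nonempty)
    (hS : IsClosed S) (hconv : Convex ℝ S) : ∃ K ∈ S, ∀ w ∈ S, ‖K‖ ≤ ‖w‖ := by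
  obtain ⟨K, hK, hKinf⟩ := exists_norm_eq_iInf_of_complete_convex hne hS.isComplete hconv 0
  refine ⟨K, hK, fun w hw => ?_⟩
  have := ciInf_le ⟨0, Set.forall_mem_range.2 fun (v : S) => norm_nonneg (0 - (v : E))⟩
    (⟨w, hw⟩ : S)
  rwa [← hKinf, zero_sub, zero_sub, norm_neg, norm_neg] at this

theorem le_inner_of_mem_closedConvexHull {s : Set E} {ε : ℝ}
    (h : ∀ x ∈ s, ∀ y ∈ s, ε ≤ ⟪x, y⟫) :
    ∀ x ∈ closedConvexHull ℝ s, ∀ y ∈ closedConvexHull ℝ s, ε ≤ ⟪x, y⟫ := by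
  have extend : ∀ x, (∀ y ∈ s, ε ≤ ⟪x, y⟫) → ∀ y ∈ closedConvexHull ℝ s, ε ≤ ⟪x, y⟫ :=
    fun x hx => closedConvexHull_min hx (convex_halfSpace_ge (innerₛₗ ℝ x).isLinear ε)
      (isClosed_le continuous_const (continuous_const.inner continuous_id) :
        IsClosed {y : E | ε ≤ ⟪x, y⟫})
  intro x hx y hy
  refine extend x (fun z hz => ?_) y hy
  rw [real_inner_comm]
  exact extend z (h z hz) x hx

theorem exists_isometry_invariant_mem_closedConvexHull [CompleteSpace E] {Γ : Type*} [Mul Γ]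
    [Nonempty Γ] (v : Γ → E) (U : Γ → E →ₗᵢ[ℝ] E) (hUv : ∀ γ δ, U γ (v δ) = v (γ * δ))
    {ε : ℝ} (hε : ∀ b c, ε ≤ ⟪v b, v c⟫) :
    ∃ K ∈ closedConvexHull ℝ (Set.range v), (∀ w ∈ closedConvexHull ℝ (Set.range v), ‖K‖ ≤ ‖w‖) ∧
      (∀ γ, U γ K = K) ∧ ε ≤ ‖K‖ ^ 2 := by
  set S := closedConvexHull ℝ (Set.range v)
  have hconv : Convex ℝ S := convex_closedConvexHull
  obtain ⟨K, hK, hmin⟩ := exists_mem_forall_norm_le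
    ((Set.range_nonempty v).mono subset_closedConvexHull) isClosed_closedConvexHull hconv
  have hmaps : ∀ γ, Set.MapsTo (U γ) S S := fun γ =>
    closedConvexHull_min
      (by rintro _ ⟨δ, rfl⟩; exact subset_closedConvexHull ⟨γ * δ, (hUv γ δ).symm⟩)
      (hconv.linear_preimage (U γ).toLinearMap)
      (isClosed_closedConvexHull.preimage (U γ).continuous)
  refine ⟨K, hK, hmin, fun γ => ?_, ?_⟩
  · exact hconv.eq_of_forall_norm_le_s18 hK (hmaps γ hK) hmin ((U γ).norm_map K).le
  rw [← real_inner_self_eq_norm_sq]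
  exact le_inner_of_mem_closedConvexHull (by rintro _ ⟨b, rfl⟩ _ ⟨c, rfl⟩; exact hε b c) K hK K hK

end Hilbert

namespace MeasureTheory.MeasurePreserving

variable {α : Type*} [MeasurableSpace α] {μ : Measure α} {T : α → α}

theorem preimage_ae_eq_of_idempotent (hT : MeasurePreserving T μ μ) (hTT : ∀ x, T (T x) = T x)
    {A : Set α} (hA : MeasurableSet A) : T ⁻¹' A =ᵐ[μ] A := by
  have hTTA : T ⁻¹' (T ⁻¹' A) = T ⁻¹' A := by ext x; simp [hTT x]
  have null_of_preimage_empty : ∀ s, MeasurableSet s → T ⁻¹' s = ∅ → μ s = 0 := fun s hs h => by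
    rw [← hT.measure_preimage hs.nullMeasurableSet, h, measure_empty]
  have hA' := hT.measurable hA
  refine ae_eq_set.mpr ⟨null_of_preimage_empty _ (hA'.diff hA) ?_,
    null_of_preimage_empty _ (hA.diff hA') ?_⟩ <;> rw [Set.preimage_sdiff, hTTA, Set.sdiff_self]

/-- The Koopman operator of an idempotent measure-preserving map is an idempotent isometry,
hence the identity. -/
theorem comp_ae_eq_of_idempotent {E : Type*} [NormedAddCommGroup E] {p : ℝ≥0∞} [Fact (1 ≤ p)]
    (hT : MeasurePreserving T μ μ) (hTT : ∀ x, T (T x) = T x) {f : α → E} (hf : MemLp f p μ) :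
    f ∘ T =ᵐ[μ] f := by
  have hfT := hf.comp_measurePreserving hT
  have hKoopman : Lp.compMeasurePreserving T hT (hfT.toLp (f ∘ T)) =
      Lp.compMeasurePreserving T hT (hf.toLp f) :=
    (hfT.comp_measurePreserving hT).toLp_congr hfT (.of_eq (funext fun x => by simp [hTT x]))
  exact (MemLp.toLp_eq_toLp_iff hfT hf).mp
    ((Lp.isometry_compMeasurePreserving hT).injective hKoopman)

end MeasureTheory.MeasurePreserving

namespace MeasureTheory.Lp

variable {α E : Type*} [MeasurableSpace α] {μ : Measure α} [NormedAddCommGroup E] {p : ℝ≥0∞}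

theorem coeFn_finset_sum {ι : Type*} (s : Finset ι) (F : ι → Lp E p μ) :
    ⇑(∑ i ∈ s, F i) =ᵐ[μ] ∑ i ∈ s, ⇑(F i) := by
  induction s using Finset.cons_induction with
  | empty => simpa using Lp.coeFn_zero E p μ
  | cons i s hi ih =>
    simp only [Finset.sum_cons]
    exact (Lp.coeFn_add _ _).trans (EventuallyEq.rfl.add ih)

end MeasureTheory.Lp

section ConvexCombinations

variable {α : Type*} [MeasurableSpace α] {μ : Measure α} {p : ℝ≥0∞}
  {ι : Type*} {g : ι → α → ℂ} {k : α → ℂ}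

theorem edist_toLp_sum_smul_toLp (hg : ∀ i, MemLp (g i) p μ) (hk : MemLp k p μ) {n : ℕ}
    (γ : Fin n → ι) (w : Fin n → ℝ) :
    edist (hk.toLp k) (∑ i, w i • (hg (γ i)).toLp (g (γ i))) =
      eLpNorm (fun x => k x - ∑ i, (w i : ℂ) * g (γ i) x) p μ := by
  rw [Lp.edist_def]
  refine eLpNorm_congr_ae ?_
  filter_upwards [hk.coeFn_toLp,
    Lp.coeFn_finset_sum Finset.univ fun i => w i • (hg (γ i)).toLp (g (γ i)),
    ae_all_iff.2 fun i => Lp.coeFn_smul (w i) ((hg (γ i)).toLp (g (γ i))),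
    ae_all_iff.2 fun i => (hg (γ i)).coeFn_toLp] with x hkx hsum hsmul hgx
  rw [Pi.sub_apply, hkx, hsum, Finset.sum_apply]
  simp only [hsmul, Pi.smul_apply, hgx, Complex.real_smul]

theorem toLp_mem_closedConvexHull_range_iff [Fact (1 ≤ p)] (hg : ∀ i, MemLp (g i) p μ)
    (hk : MemLp k p μ) :
    hk.toLp k ∈ closedConvexHull ℝ (Set.range fun i => (hg i).toLp (g i)) ↔
      ∀ δ : ℝ, 0 < δ → ∃ (n : ℕ) (γ : Fin n → ι) (w : Fin n → ℝ),
        (∀ i, 0 ≤ w i) ∧ (∑ i, w i) = 1 ∧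
        eLpNorm (fun x => k x - ∑ i, (w i : ℂ) * g (γ i) x) p μ < ENNReal.ofReal δ := by
  rw [closedConvexHull_eq_closure_convexHull, Metric.mem_closure_iff]
  refine forall₂_congr fun δ hδ => ⟨?_, ?_⟩
  · rintro ⟨_, hc, hdist⟩
    obtain ⟨ι', _, w, z, hw0, hw1, hz, rfl⟩ := mem_convexHull_iff_exists_fintype.1 hc
    choose γ hγ using hz
    let e := Fintype.equivFin ι'
    refine ⟨_, γ ∘ e.symm, w ∘ e.symm, fun i => hw0 _, by simpa [e.symm.sum_comp w] using hw1, ?_⟩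
    rw [← edist_toLp_sum_smul_toLp hg hk, edist_lt_ofReal]
    simpa [e.symm.sum_comp (fun i => w i • z i), hγ] using hdist
  · rintro ⟨n, γ, w, hw0, hw1, hlt⟩
    refine ⟨_, (convex_convexHull ℝ _).sum_mem (fun i _ => hw0 i) hw1
      (fun i _ => subset_convexHull ℝ _ ⟨γ i, rfl⟩), ?_⟩
    rwa [← edist_lt_ofReal, edist_toLp_sum_smul_toLp hg hk]

end ConvexCombinations

section Disintegration

variable {X Y : Type*} [MeasurableSpace X] [MeasurableSpace Y] {ν : Measure Y} {κ : Kernel Y X}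
  {π : X → Y}

theorem comp_apply_preimage_inter (hπ : Measurable π) (hfib : ∀ᵐ y ∂ν, ∀ᵐ x ∂κ y, π x = y)
    {B : Set Y} (hB : MeasurableSet B) {A : Set X} (hA : MeasurableSet A) :
    (κ ∘ₘ ν) (π ⁻¹' B ∩ A) = ∫⁻ y in B, κ y A ∂ν := by
  rw [Measure.bind_apply ((hπ hB).inter hA) κ.aemeasurable, ← lintegral_indicator hB]
  refine lintegral_congr_ae ?_
  filter_upwards [hfib] with y hy
  have : (π ⁻¹' B ∩ A : Set X) =ᵐ[κ y] ({_x | y ∈ B} ∩ A : Set X) := by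
    filter_upwards [hy] with x hx
    change (x ∈ π ⁻¹' B ∩ A) = (x ∈ {_x | y ∈ B} ∩ A)
    simp [hx]
  by_cases hyB : y ∈ B <;> simp [measure_congr this, hyB]

theorem map_comp_eq_of_ae_fiber [IsMarkovKernel κ] (hπ : Measurable π)
    (hfib : ∀ᵐ y ∂ν, ∀ᵐ x ∂κ y, π x = y) : (κ ∘ₘ ν).map π = ν := by
  ext B hB
  rw [Measure.map_apply hπ hB, ← Set.inter_univ (π ⁻¹' B),
    comp_apply_preimage_inter hπ hfib hB MeasurableSet.univ]
  simp

theorem ae_eq_set_map_iff {α β : Type*} [MeasurableSpace α] [MeasurableSpace β] {μ : Measure α}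
    {f : α → β} (hf : Measurable f) {s t : Set β} (hs : MeasurableSet s) (ht : MeasurableSet t) :
    s =ᵐ[μ.map f] t ↔ f ⁻¹' s =ᵐ[μ] f ⁻¹' t := by
  simp only [ae_eq_set, Measure.map_apply hf (hs.diff ht), Measure.map_apply hf (ht.diff hs),
    Set.preimage_sdiff]

/-- Both sides have the same integral over every measurable `B`, once `B` is written as
`σ ⁻¹' B'` up to a null set. -/
theorem ae_kernel_preimage_eq_of_semiconj [SigmaFinite ν] (hπ : Measurable π)
    (hfib : ∀ᵐ y ∂ν, ∀ᵐ x ∂κ y, π x = y) {τ : X → X} (hτ : MeasurePreserving τ (κ ∘ₘ ν) (κ ∘ₘ ν))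
    {σ : Y → Y} (hσ : MeasurePreserving σ ν ν) (hsemi : Function.Semiconj π τ σ)
    (hσinv : ∀ B, MeasurableSet B → ∃ B', MeasurableSet B' ∧ σ ⁻¹' B' =ᵐ[ν] B)
    {A : Set X} (hA : MeasurableSet A) : ∀ᵐ y ∂ν, κ y (τ ⁻¹' A) = κ (σ y) A := by
  refine ae_eq_of_forall_setLIntegral_eq_of_sigmaFinite (κ.measurable_coe (hτ.measurable hA))
    ((κ.measurable_coe hA).comp hσ.measurable) fun B hB _ => ?_
  obtain ⟨B', hB', hBB'⟩ := hσinv B hB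
  have hpre : τ ⁻¹' (π ⁻¹' B' ∩ A) = π ⁻¹' (σ ⁻¹' B') ∩ τ ⁻¹' A := by
    ext x; simp [hsemi x]
  calc ∫⁻ y in B, κ y (τ ⁻¹' A) ∂ν
      = ∫⁻ y in σ ⁻¹' B', κ y (τ ⁻¹' A) ∂ν := setLIntegral_congr hBB'.symm
    _ = (κ ∘ₘ ν) (τ ⁻¹' (π ⁻¹' B' ∩ A)) := by
      rw [hpre, comp_apply_preimage_inter hπ hfib (hσ.measurable hB') (hτ.measurable hA)]
    _ = ∫⁻ y in B', κ y A ∂ν := by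
      rw [hτ.measure_preimage ((hπ hB').inter hA).nullMeasurableSet,
        comp_apply_preimage_inter hπ hfib hB' hA]
    _ = ∫⁻ y in σ ⁻¹' B', κ (σ y) A ∂ν :=
      (hσ.setLIntegral_comp_preimage hB' (κ.measurable_coe hA)).symm
    _ = ∫⁻ y in B, κ (σ y) A ∂ν := setLIntegral_congr hBB'

end Disintegration

section RelativeProduct

variable {X Y : Type*} [MeasurableSpace X] [MeasurableSpace Y] {ν : Measure Y} {κ : Kernel Y X}

/-- The relatively independent self-product `X ×_Y X`. -/
noncomputable def relIndepProd (ν : Measure Y) (κ : Kernel Y X) : Measure (X × X) :=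
  ν.bind fun y => (κ y).prod (κ y)

/-- `h ⊗ h̄`. -/
def conjTensor (h : X → ℂ) (p : X × X) : ℂ := h p.1 * starRingEnd ℂ (h p.2)

theorem relIndepProd_eq_comp [IsSFiniteKernel κ] : relIndepProd ν κ = (κ ×ₖ κ) ∘ₘ ν := by
  unfold relIndepProd
  congr 1
  exact funext fun y => (Kernel.prod_apply κ κ y).symm

theorem relIndepProd_apply_prod [IsSFiniteKernel κ] {A B : Set X} (hA : MeasurableSet A)
    (hB : MeasurableSet B) : relIndepProd ν κ (A ×ˢ B) = ∫⁻ y, κ y A * κ y B ∂ν := by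
  rw [relIndepProd_eq_comp, Measure.bind_apply (hA.prod hB) (Kernel.aemeasurable _)]
  simp_rw [Kernel.prod_apply, Measure.prod_prod]

theorem integral_comp_kernel {E : Type*} [NormedAddCommGroup E] [NormedSpace ℝ E] {f : X → E}
    (hf : Integrable f (κ ∘ₘ ν)) : ∫ x, f x ∂(κ ∘ₘ ν) = ∫ y, ∫ x, f x ∂κ y ∂ν := by
  rw [Measure.comp_eq_comp_const_apply] at hf ⊢
  simpa using Kernel.integral_comp hf

theorem measurePreserving_prodMap_relIndepProd [IsFiniteMeasure ν] [IsFiniteKernel κ]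
    {τ : X → X} (hτ : Measurable τ) {σ : Y → Y} (hσ : MeasurePreserving σ ν ν)
    (hκ : ∀ A, MeasurableSet A → ∀ᵐ y ∂ν, κ y (τ ⁻¹' A) = κ (σ y) A) :
    MeasurePreserving (Prod.map τ τ) (relIndepProd ν κ) (relIndepProd ν κ) := by
  refine ⟨hτ.prodMap hτ, ?_⟩
  rw [relIndepProd_eq_comp]
  refine ext_of_generate_finite _ generateFrom_prod.symm isPiSystem_prod ?_
    (by rw [Measure.map_apply (hτ.prodMap hτ) .univ, Set.preimage_univ])
  rintro _ ⟨A, hA, B, hB, rfl⟩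
  rw [Measure.map_apply (hτ.prodMap hτ) (hA.prod hB), Set.preimage_prod_map_prod,
    ← relIndepProd_eq_comp, relIndepProd_apply_prod (hτ hA) (hτ hB), relIndepProd_apply_prod hA hB]
  calc ∫⁻ y, κ y (τ ⁻¹' A) * κ y (τ ⁻¹' B) ∂ν = ∫⁻ y, κ (σ y) A * κ (σ y) B ∂ν := by
        refine lintegral_congr_ae ?_
        filter_upwards [hκ A hA, hκ B hB] with y hyA hyB
        rw [hyA, hyB]
    _ = ∫⁻ y, κ y A * κ y B ∂ν :=
        hσ.lintegral_comp ((κ.measurable_coe hA).mul (κ.measurable_coe hB))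

theorem integral_prod_conjTensor (m : Measure X) [SFinite m] (h : X → ℂ) :
    ∫ p, conjTensor h p ∂m.prod m = ((‖∫ x, h x ∂m‖ ^ 2 : ℝ) : ℂ) := by
  simp only [conjTensor]
  rw [integral_prod_mul h (fun x => starRingEnd ℂ (h x)), integral_conj, RCLike.mul_conj]
  push_cast
  rfl

theorem memLp_conjTensor [IsSFiniteKernel κ] {h : X → ℂ} (hm : Measurable h)
    (hL2 : MemLp h 2 (κ ∘ₘ ν)) (hsq : Integrable (fun y => (∫ x, ‖h x‖ ^ 2 ∂κ y) ^ 2) ν) :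
    MemLp (conjTensor h) 2 (relIndepProd ν κ) := by
  have hmeas : Measurable (conjTensor h) :=
    (hm.comp measurable_fst).mul (Complex.continuous_conj.measurable.comp (hm.comp measurable_snd))
  have hnorm : (fun p => ‖conjTensor h p‖ ^ 2) = fun p => ‖h p.1‖ ^ 2 * ‖h p.2‖ ^ 2 := by
    ext p; simp [conjTensor, mul_pow]
  rw [memLp_two_iff_integrable_sq_norm hmeas.aestronglyMeasurable, hnorm, relIndepProd_eq_comp,
    Measure.integrable_comp_iff ((hmeas.norm.pow_const 2).aestronglyMeasurable.congr
      (.of_eq hnorm))]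
  refine ⟨?_, hsq.congr (.of_eq (funext fun y => ?_))⟩
  · filter_upwards [Measure.ae_integrable_of_integrable_comp hL2.norm.integrable_sq] with y hy
    rw [Kernel.prod_apply]
    exact hy.mul_prod hy
  · simp_rw [Kernel.prod_apply, norm_mul, norm_pow, norm_norm]
    rw [integral_prod_mul (fun x => ‖h x‖ ^ 2) (fun x => ‖h x‖ ^ 2), sq]

theorem memLp_conjTensor_of_integral_pos [IsSFiniteKernel κ] {h : X → ℂ} (hm : Measurable h)
    (hL2 : MemLp h 2 (κ ∘ₘ ν))
    (hpos : 0 < ∫ y, ‖∫ x, h x * starRingEnd ℂ (h x) ∂κ y‖ ^ 2 ∂ν) :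
    MemLp (conjTensor h) 2 (relIndepProd ν κ) := by
  -- a non-integrable function has Bochner integral `0`
  refine memLp_conjTensor hm hL2
    ((Integrable.of_integral_ne_zero hpos.ne').congr (.of_forall fun y => ?_))
  have : ∫ x, h x * starRingEnd ℂ (h x) ∂κ y = ((∫ x, ‖h x‖ ^ 2 ∂κ y : ℝ) : ℂ) := by
    rw [← integral_complex_ofReal]
    congr with x
    rw [RCLike.mul_conj]
    push_cast
    rfl
  dsimp only
  rw [this, Complex.norm_real, Real.norm_of_nonneg (integral_nonneg fun _ => by positivity)]

theorem inner_toLp_conjTensor [IsSFiniteKernel κ] {u v : X → ℂ}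
    (hu : MemLp (conjTensor u) 2 (relIndepProd ν κ))
    (hv : MemLp (conjTensor v) 2 (relIndepProd ν κ)) :
    ⟪hu.toLp _, hv.toLp _⟫ = ∫ y, ‖∫ x, v x * starRingEnd ℂ (u x) ∂κ y‖ ^ 2 ∂ν := by
  have hprod : ∀ p, conjTensor v p * starRingEnd ℂ (conjTensor u p) =
      conjTensor (fun x => v x * starRingEnd ℂ (u x)) p := fun p => by
    simp only [conjTensor, map_mul, Complex.conj_conj]; ring
  have hint : Integrable (conjTensor fun x => v x * starRingEnd ℂ (u x)) (relIndepProd ν κ) := by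
    refine (L2.integrable_inner (𝕜 := ℂ) (hu.toLp _) (hv.toLp _)).congr ?_
    filter_upwards [hu.coeFn_toLp, hv.coeFn_toLp] with p hup hvp
    rw [hup, hvp, ← hprod, RCLike.inner_apply, mul_comm]
  calc ⟪hu.toLp _, hv.toLp _⟫
      = ∫ p, (conjTensor (fun x => v x * starRingEnd ℂ (u x)) p).re ∂relIndepProd ν κ := by
        rw [L2.inner_def]
        refine integral_congr_ae ?_
        filter_upwards [hu.coeFn_toLp, hv.coeFn_toLp] with p hup hvp
        rw [hup, hvp, Complex.inner, hprod]
    _ = (∫ p, conjTensor (fun x => v x * starRingEnd ℂ (u x)) p ∂relIndepProd ν κ).re :=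
        integral_re hint
    _ = ∫ y, ‖∫ x, v x * starRingEnd ℂ (u x) ∂κ y‖ ^ 2 ∂ν := by
        rw [relIndepProd_eq_comp] at hint ⊢
        rw [integral_comp_kernel hint]
        simp_rw [Kernel.prod_apply, integral_prod_conjTensor]
        rw [integral_complex_ofReal, Complex.ofReal_re]

end RelativeProduct

theorem measurePreserving_prodMap_relIndepProd_of_factor {X Y : Type*} [MeasurableSpace X]
    [MeasurableSpace Y] {ν : Measure Y} [IsFiniteMeasure ν] {κ : Kernel Y X} [IsMarkovKernel κ]
    {π : X → Y} (hπ : Measurable π) (hfib : ∀ᵐ y ∂ν, ∀ᵐ x ∂κ y, π x = y) {Γ : Type*} [Group Γ]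
    {T : Γ → X → X} (hT : ∀ γ, MeasurePreserving (T γ) (κ ∘ₘ ν) (κ ∘ₘ ν))
    (hTmul : ∀ γ₁ γ₂ : Γ, ∀ x, T (γ₁ * γ₂) x = T γ₂ (T γ₁ x)) {Sa : Γ → Y → Y}
    (hSa : ∀ γ, MeasurePreserving (Sa γ) ν ν) (hfac : ∀ γ x, π (T γ x) = Sa γ (π x)) (γ : Γ) :
    MeasurePreserving (Prod.map (T γ) (T γ)) (relIndepProd ν κ) (relIndepProd ν κ) := by
  refine measurePreserving_prodMap_relIndepProd (hT γ).measurable (hSa γ) fun A hA =>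
    ae_kernel_preimage_eq_of_semiconj hπ hfib (hT γ) (hSa γ) (hfac γ)
      (fun B hB => ⟨Sa γ⁻¹ ⁻¹' B, (hSa γ⁻¹).measurable hB, ?_⟩) hA
  have hpre : π ⁻¹' (Sa γ ⁻¹' (Sa γ⁻¹ ⁻¹' B)) = T 1 ⁻¹' (π ⁻¹' B) := by
    ext x
    simp only [Set.mem_preimage]
    rw [← hfac, ← hfac, ← hTmul, mul_inv_cancel]
  rw [← map_comp_eq_of_ae_fiber hπ hfib,
    ae_eq_set_map_iff hπ ((hSa γ).measurable ((hSa γ⁻¹).measurable hB)) hB, hpre]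
  exact (hT 1).preimage_ae_eq_of_idempotent (fun x => by rw [← hTmul, one_mul]) (hπ hB)

theorem nonWeaklyMixing_invariant_kernel_general
    {X Y : Type*} [MeasurableSpace X] [MeasurableSpace Y]
    (μ : Measure X) (ν : Measure Y) [IsProbabilityMeasure ν]
    (π : X → Y) (hπ : Measurable π)
    (κ : Kernel Y X) [IsMarkovKernel κ]
    (hμ : μ = ν.bind fun y => κ y)
    (hsupp : ∀ᵐ y ∂ν, ∀ᵐ x ∂κ y, π x = y)
    {Γ : Type*} [Group Γ] (T : Γ → X → X)
    (hT : ∀ γ, MeasurePreserving (T γ) μ μ)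
    (hTmul : ∀ γ₁ γ₂ : Γ, ∀ x, T (γ₁ * γ₂) x = T γ₂ (T γ₁ x))
    (Sa : Γ → Y → Y) (hSa : ∀ γ, MeasurePreserving (Sa γ) ν ν)
    (hfac : ∀ γ x, π (T γ x) = Sa γ (π x))
    (f : X → ℂ) (hfm : Measurable f) (hfL2 : MemLp f 2 μ)
    (ε : ℝ) (hε : 0 < ε)
    (hnwm : ∀ γ : Γ, ε ≤ ∫ y, ‖∫ x, f (T γ x) * (starRingEnd ℂ) (f x) ∂κ y‖ ^ 2 ∂ν) :
    ∃ K : X × X → ℂ,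
      MemLp K 2 (ν.bind fun y => (κ y).prod (κ y)) ∧
      (∀ δ : ℝ, 0 < δ → ∃ (n : ℕ) (γ : Fin n → Γ) (w : Fin n → ℝ),
        (∀ i, 0 ≤ w i) ∧ (∑ i, w i) = 1 ∧
        eLpNorm (fun p : X × X => K p -
            ∑ i, (w i : ℂ) * (f (T (γ i) p.1) * (starRingEnd ℂ) (f (T (γ i) p.2)))) 2
          (ν.bind fun y => (κ y).prod (κ y)) < ENNReal.ofReal δ) ∧
      (∀ K' : X × X → ℂ,
        MemLp K' 2 (ν.bind fun y => (κ y).prod (κ y)) →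
        (∀ δ : ℝ, 0 < δ → ∃ (n : ℕ) (γ : Fin n → Γ) (w : Fin n → ℝ),
          (∀ i, 0 ≤ w i) ∧ (∑ i, w i) = 1 ∧
          eLpNorm (fun p : X × X => K' p -
              ∑ i, (w i : ℂ) * (f (T (γ i) p.1) * (starRingEnd ℂ) (f (T (γ i) p.2)))) 2
            (ν.bind fun y => (κ y).prod (κ y)) < ENNReal.ofReal δ) →
        eLpNorm K 2 (ν.bind fun y => (κ y).prod (κ y)) ≤
          eLpNorm K' 2 (ν.bind fun y => (κ y).prod (κ y))) ∧
      (∀ γ : Γ, (fun p : X × X => K (T γ p.1, T γ p.2))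
          =ᵐ[ν.bind fun y => (κ y).prod (κ y)] K) ∧
      ENNReal.ofReal ε ≤ (eLpNorm K 2 (ν.bind fun y => (κ y).prod (κ y))) ^ 2 := by
  subst hμ
  rw [show (ν.bind fun y => (κ y).prod (κ y)) = relIndepProd ν κ from rfl]
  have hD := measurePreserving_prodMap_relIndepProd_of_factor hπ hsupp hT hTmul hSa hfac
  have hg₀ : MemLp (conjTensor f) 2 (relIndepProd ν κ) := by
    refine memLp_conjTensor_of_integral_pos hfm hfL2
      (hε.trans_le ((hnwm 1).trans_eq (integral_congr_ae ?_)))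
    have hf1 := (hT 1).comp_ae_eq_of_idempotent (fun x => by rw [← hTmul, one_mul]) hfL2
    filter_upwards [Measure.ae_ae_of_ae_bind κ.aemeasurable hf1] with y hy
    congr 2
    exact integral_congr_ae (hy.mono fun x hx => congrArg (· * starRingEnd ℂ (f x)) hx)
  have hg : ∀ γ, MemLp (conjTensor (f ∘ T γ)) 2 (relIndepProd ν κ) :=
    fun γ => hg₀.comp_measurePreserving (hD γ)
  set G : Γ → Lp ℂ 2 (relIndepProd ν κ) := fun γ => (hg γ).toLp _
  set U := fun γ => Lp.compMeasurePreservingₗᵢ (E := ℂ) (p := 2) ℝ _ (hD γ)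
  have hUG : ∀ γ δ, U γ (G δ) = G (γ * δ) := fun γ δ =>
    MemLp.toLp_congr ((hg δ).comp_measurePreserving (hD γ)) (hg (γ * δ))
      (.of_eq (funext fun p => by simp [conjTensor, hTmul]))
  have hpair : ∀ b c, ε ≤ ⟪G b, G c⟫ := by
    intro b c
    rw [← mul_inv_cancel_left b c, ← hUG, show G b = U b (hg₀.toLp _) from rfl,
      LinearIsometry.inner_map_map, inner_toLp_conjTensor]
    exact hnwm (b⁻¹ * c)
  obtain ⟨K, hK, hmin, hinv, hnorm⟩ := exists_isometry_invariant_mem_closedConvexHull G U hUG hpair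
  refine ⟨K, Lp.memLp K, ?_, fun K' hK' hK'approx => ?_, fun γ => ?_, ?_⟩
  · exact (toLp_mem_closedConvexHull_range_iff hg (Lp.memLp K)).1 (by rwa [Lp.toLp_coeFn])
  · have := hmin _ ((toLp_mem_closedConvexHull_range_iff hg hK').2 hK'approx)
    rw [← eLpNorm_congr_ae hK'.coeFn_toLp, ← Lp.enorm_def, ← Lp.enorm_def,
      ← ofReal_norm, ← ofReal_norm]
    exact ENNReal.ofReal_le_ofReal this
  · have := Lp.coeFn_compMeasurePreserving K (hD γ)
    rw [show Lp.compMeasurePreserving _ (hD γ) K = K from hinv γ] at this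
    exact this.symm
  · rw [← Lp.enorm_def, ← ofReal_norm, ← ENNReal.ofReal_pow (norm_nonneg _)]
    exact ENNReal.ofReal_le_ofReal hnorm

/-- If `f` with `E(f|Y) = 0` is not relatively weakly mixing (all conditional
autocorrelations have `‖E((T^γ)*f·f̄|Y)‖²_{L²(Y)} ≥ ε`), then the minimal-norm element `K`
of the closed convex hull of the orbit of `f ⊗ f̄` in `L²(X ×_Y X)` is `Γ`-invariant and
non-zero, with `‖K‖² ≥ ε`. Here `X ×_Y X` carries the relatively independent product
measure `∫ κ y × κ y dν(y)`. -/
theorem nonWeaklyMixing_invariant_kernel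
    {X Y : Type*} [MeasurableSpace X] [MeasurableSpace Y]
    (μ : Measure X) (ν : Measure Y) [IsProbabilityMeasure μ] [IsProbabilityMeasure ν]
    (π : X → Y) (hπ : Measurable π)
    (κ : Kernel Y X) [IsMarkovKernel κ]
    (hμ : μ = ν.bind fun y => κ y)
    (hsupp : ∀ᵐ y ∂ν, ∀ᵐ x ∂κ y, π x = y)
    {Γ : Type*} [Group Γ] (T : Γ → X → X)
    (hT : ∀ γ, MeasurePreserving (T γ) μ μ)
    (hTmul : ∀ γ₁ γ₂ : Γ, ∀ x, T (γ₁ * γ₂) x = T γ₂ (T γ₁ x))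
    (Sa : Γ → Y → Y) (hSa : ∀ γ, MeasurePreserving (Sa γ) ν ν)
    (hfac : ∀ γ x, π (T γ x) = Sa γ (π x))
    (f : X → ℂ) (hfm : Measurable f) (hfL2 : MemLp f 2 μ)
    (hfE : ∀ᵐ y ∂ν, ∫ x, f x ∂κ y = 0)
    (ε : ℝ) (hε : 0 < ε)
    (hnwm : ∀ γ : Γ, ε ≤ ∫ y, ‖∫ x, f (T γ x) * (starRingEnd ℂ) (f x) ∂κ y‖ ^ 2 ∂ν) :
    ∃ K : X × X → ℂ,
      MemLp K 2 (ν.bind fun y => (κ y).prod (κ y)) ∧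
      (∀ δ : ℝ, 0 < δ → ∃ (n : ℕ) (γ : Fin n → Γ) (w : Fin n → ℝ),
        (∀ i, 0 ≤ w i) ∧ (∑ i, w i) = 1 ∧
        eLpNorm (fun p : X × X => K p -
            ∑ i, (w i : ℂ) * (f (T (γ i) p.1) * (starRingEnd ℂ) (f (T (γ i) p.2)))) 2
          (ν.bind fun y => (κ y).prod (κ y)) < ENNReal.ofReal δ) ∧
      (∀ K' : X × X → ℂ,
        MemLp K' 2 (ν.bind fun y => (κ y).prod (κ y)) →
        (∀ δ : ℝ, 0 < δ → ∃ (n : ℕ) (γ : Fin n → Γ) (w : Fin n → ℝ),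
          (∀ i, 0 ≤ w i) ∧ (∑ i, w i) = 1 ∧
          eLpNorm (fun p : X × X => K' p -
              ∑ i, (w i : ℂ) * (f (T (γ i) p.1) * (starRingEnd ℂ) (f (T (γ i) p.2)))) 2
            (ν.bind fun y => (κ y).prod (κ y)) < ENNReal.ofReal δ) →
        eLpNorm K 2 (ν.bind fun y => (κ y).prod (κ y)) ≤
          eLpNorm K' 2 (ν.bind fun y => (κ y).prod (κ y))) ∧
      (∀ γ : Γ, (fun p : X × X => K (T γ p.1, T γ p.2))
          =ᵐ[ν.bind fun y => (κ y).prod (κ y)] K) ∧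
      ENNReal.ofReal ε ≤ (eLpNorm K 2 (ν.bind fun y => (κ y).prod (κ y))) ^ 2 :=
  nonWeaklyMixing_invariant_kernel_general μ ν π hπ κ hμ hsupp T hT hTmul Sa hSa hfac f hfm hfL2 ε
    hε hnwm
end
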